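/- Let (β,δ) lie in the exponential regime ℰ and let β + δ < α < 1 − δ. Then, as N → ∞, the Green-function occupation sum Σ_{n=1}^{⌊N^α⌋} G_N(n,n) is logarithmically equivalent to exp(2 N^{α−β−δ}), i.e. log( Σ_{n=1}^{⌊N^α⌋} G_N(n,n) ) / ( 2 N^{α−β−δ} ) → 1. -/

import Mathlib

/-!
Write `a = N^{-β}`, `d = N^{-δ}`, `M = ⌊N^α⌋` and `x = 1 - k/N`. Then
`p_k/q_k = 1 + 2a(x - (1 - d))/((1 - d)(x + 2a))`, and for `k ≤ M` we have
`1 - M/N ≤ x ≤ 1` with `M/N ≤ N^{α-1} ≤ d`, so `p_k/q_k` lies between `1 + c` and `1 + C`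
(`lowerGap`, `upperGap`) where `N^{β+δ} c → 2` and `N^{β+δ} C → 2`. Each product in
`G_N(n,n)`, `n ≤ M`, is then at most `exp (C M)`, while the term `l = 0` of `G_N(M,M)` alone
is at least `(1 + c)^{M-1}/(M q_M)`. Hence
`log Σ_{n ≤ M} G_N(n,n) = (2 + o(1)) M N^{-(β+δ)} + O(log N)`, and
`M N^{-(β+δ)} ∼ N^{α-β-δ}` dominates `log N`.
-/

open Filter Finset

namespace MullerRatchet4

/-- Per-capita upward rate of the time-rescaled best-class process:
`p_n = (1/(2m) + 1/ρ)(1 − n/N)` with `m = N^{−β}`, `ρ = 1 − N^{−δ}`. -/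
noncomputable def pr (β δ : ℝ) (N n : ℕ) : ℝ :=
  (1 / (2 * (N:ℝ)^(-β)) + 1 / (1 - (N:ℝ)^(-δ))) * (1 - (n:ℝ)/(N:ℝ))

/-- Per-capita downward rate `q_n = (1/(2m))(1 − n/N) + 1` with `m = N^{−β}`. -/
noncomputable def qr (β : ℝ) (N n : ℕ) : ℝ :=
  (1 / (2 * (N:ℝ)^(-β))) * (1 - (n:ℝ)/(N:ℝ)) + 1

/-- Green function `G_N(n₀,n) = (1/(n q_n)) Σ_{l=0}^{min(n₀,n)−1} ∏_{k=l+1}^{n−1} p_k/q_k`. -/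
noncomputable def G (β δ : ℝ) (N n₀ n : ℕ) : ℝ :=
  (1 / ((n:ℝ) * qr β N n)) * ∑ l ∈ Finset.range (min n₀ n),
    ∏ k ∈ Finset.Icc (l+1) (n-1), pr β δ N k / qr β N k

section RateRatio

variable {a d μ x : ℝ}

theorem rate_ratio_eq (ha : 0 < a) (hd : d < 1) (hx : 0 ≤ x) :
    (1 / (2 * a) + 1 / (1 - d)) * x / (1 / (2 * a) * x + 1)
      = 1 + 2 * a * (x - (1 - d)) / ((1 - d) * (x + 2 * a)) := by
  have : 0 < 1 - d := by linarith
  field_simp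
  ring

theorem rate_ratio_le (ha : 0 < a) (hd0 : 0 ≤ d) (hd : d < 1) (hx0 : 0 ≤ x) (hx1 : x ≤ 1) :
    (1 / (2 * a) + 1 / (1 - d)) * x / (1 / (2 * a) * x + 1) ≤ 1 + 2 * a * d / (1 - d) := by
  have hd' : 0 < 1 - d := by linarith
  rw [rate_ratio_eq ha hd hx0, add_le_add_iff_left, div_le_div_iff₀ (by positivity) hd']
  have hx1' : 0 ≤ 1 - x := by linarith
  have : 0 ≤ 2 * a * (1 - d) * ((1 - x) * (1 - d) + 2 * a * d) := by positivity
  nlinarith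

theorem le_rate_ratio (ha : 0 < a) (hd0 : 0 ≤ d) (hd1 : d < 1) (hμd : μ ≤ d)
    (hx0 : 1 - μ ≤ x) (hx1 : x ≤ 1) :
    1 + 2 * a * (d - μ) / (1 + 2 * a) ≤
      (1 / (2 * a) + 1 / (1 - d)) * x / (1 / (2 * a) * x + 1) := by
  have hd' : 0 < 1 - d := by linarith
  rw [rate_ratio_eq ha hd1 (by linarith), add_le_add_iff_left,
    div_le_div_iff₀ (by positivity) (by nlinarith)]
  have hden : (1 - d) * (x + 2 * a) ≤ 1 + 2 * a := by nlinarith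
  have hnum : d - μ ≤ x - (1 - d) := by linarith
  nlinarith [mul_le_mul hnum hden (by nlinarith) (by linarith)]

end RateRatio

noncomputable def upperGap (β δ : ℝ) (N : ℕ) : ℝ :=
  2 * (N:ℝ)^(-β) * (N:ℝ)^(-δ) / (1 - (N:ℝ)^(-δ))

noncomputable def lowerGap (β δ : ℝ) (N M : ℕ) : ℝ :=
  2 * (N:ℝ)^(-β) * ((N:ℝ)^(-δ) - (M:ℝ)/N) / (1 + 2 * (N:ℝ)^(-β))

section Rates

variable {β δ : ℝ} {N M k : ℕ}

theorem one_le_qr (hk : k ≤ N) : 1 ≤ qr β N k := by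
  have hx : 0 ≤ 1 - (k:ℝ)/N :=
    sub_nonneg.2 (div_le_one_of_le₀ (by exact_mod_cast hk) (by positivity))
  have : 0 ≤ 1 / (2 * (N:ℝ)^(-β)) * (1 - (k:ℝ)/N) := by positivity
  unfold qr
  linarith

theorem qr_le_self (hN : 2 ≤ N) (hβ : β ≤ 1) : qr β N k ≤ N := by
  have hN' : (2:ℝ) ≤ N := by exact_mod_cast hN
  have hNβ : (N:ℝ)^β ≤ N := Real.rpow_le_self_of_one_le (by linarith) hβ
  have hinv : 1 / (2 * (N:ℝ)^(-β)) = (N:ℝ)^β / 2 := by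
    rw [Real.rpow_neg (by positivity)]
    field_simp
  have hx : 1 - (k:ℝ)/N ≤ 1 := by
    have : 0 ≤ (k:ℝ)/N := by positivity
    linarith
  unfold qr
  rw [hinv]
  nlinarith [Real.rpow_nonneg (by positivity : (0:ℝ) ≤ N) β]

theorem rate_ratio_bounds (hN : 1 < N) (hδ : 0 < δ) (hMN : (M:ℝ)/N ≤ (N:ℝ)^(-δ)) (hk : k ≤ M) :
    1 + lowerGap β δ N M ≤ pr β δ N k / qr β N k ∧
      pr β δ N k / qr β N k ≤ 1 + upperGap β δ N := by
  have hN1 : (1:ℝ) < N := by exact_mod_cast hN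
  have ha : 0 < (N:ℝ)^(-β) := Real.rpow_pos_of_pos (by linarith) _
  have hd0 : 0 ≤ (N:ℝ)^(-δ) := Real.rpow_nonneg (by linarith) _
  have hd1 : (N:ℝ)^(-δ) < 1 := Real.rpow_lt_one_of_one_lt_of_neg hN1 (by linarith)
  have hkM : (k:ℝ)/N ≤ (M:ℝ)/N := by gcongr
  have hk0 : 0 ≤ (k:ℝ)/N := by positivity
  exact ⟨le_rate_ratio ha hd0 hd1 hMN (by linarith) (by linarith),
    rate_ratio_le ha hd0 hd1 (by linarith) (by linarith)⟩

end Rates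

section Green

variable {β δ : ℝ} {N n : ℕ}

theorem G_diag_le_exp {C : ℝ} (hn : 0 < n) (hC : 0 ≤ C) (hq : 1 ≤ qr β N n)
    (hr : ∀ k < n, 0 ≤ pr β δ N k / qr β N k ∧ pr β δ N k / qr β N k ≤ 1 + C) :
    G β δ N n n ≤ Real.exp (C * n) := by
  have hprod : ∀ l ∈ range n,
      ∏ k ∈ Icc (l+1) (n-1), pr β δ N k / qr β N k ≤ Real.exp (C * n) := by
    intro l _
    have hk : ∀ k ∈ Icc (l+1) (n-1), k < n := fun k hk => by grind
    calc ∏ k ∈ Icc (l+1) (n-1), pr β δ N k / qr β N k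
        ≤ ∏ _k ∈ Icc (l+1) (n-1), Real.exp C :=
          prod_le_prod (fun k hk' => (hr k (hk k hk')).1)
            fun k hk' => (hr k (hk k hk')).2.trans (by linarith [Real.add_one_le_exp C])
      _ = Real.exp (C * #(Icc (l+1) (n-1))) := by rw [prod_const, ← Real.exp_nat_mul, mul_comm]
      _ ≤ Real.exp (C * n) := by
          gcongr
          simp only [Nat.card_Icc]
          omega
  have hn' : (0:ℝ) < n := by exact_mod_cast hn
  calc G β δ N n n ≤ 1 / (n * qr β N n) * (n * Real.exp (C * n)) := by
        unfold G
        rw [min_self]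
        gcongr
        simpa using sum_le_card_nsmul _ _ _ hprod
    _ = Real.exp (C * n) / qr β N n := by field_simp
    _ ≤ Real.exp (C * n) := div_le_self (Real.exp_pos _).le hq

theorem pow_div_le_G_diag {c : ℝ} (hn : 0 < n) (hc : 0 ≤ c) (hq : 0 < qr β N n)
    (hr : ∀ k < n, 1 + c ≤ pr β δ N k / qr β N k) :
    (1 + c)^(n-1) / (n * qr β N n) ≤ G β δ N n n := by
  have hr0 : ∀ k < n, 0 ≤ pr β δ N k / qr β N k := fun k hk => by linarith [hr k hk]
  have hterm : (1 + c)^(n-1) ≤ ∏ k ∈ Icc 1 (n-1), pr β δ N k / qr β N k := by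
    calc (1 + c)^(n-1) = ∏ _k ∈ Icc 1 (n-1), (1 + c) := by simp
      _ ≤ _ := prod_le_prod (fun _ _ => by linarith)
          fun k hk => hr k (by grind)
  have hsum : ∏ k ∈ Icc 1 (n-1), pr β δ N k / qr β N k ≤
      ∑ l ∈ range n, ∏ k ∈ Icc (l+1) (n-1), pr β δ N k / qr β N k :=
    single_le_sum (f := fun l => ∏ k ∈ Icc (l+1) (n-1), pr β δ N k / qr β N k)
      (fun l _ => prod_nonneg fun k hk => hr0 k (by grind)) (mem_range.2 hn)
  unfold G
  rw [min_self, one_div_mul_eq_div]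
  gcongr
  exact hterm.trans hsum

end Green

section SumBounds

variable {β δ : ℝ} {N M : ℕ}

theorem le_of_div_le_rpow_neg (hN : 1 < N) (hδ : 0 < δ) (hMN : (M:ℝ)/N ≤ (N:ℝ)^(-δ)) :
    M ≤ N := by
  have hN1 : (1:ℝ) < N := by exact_mod_cast hN
  have : (M:ℝ) / N < 1 := hMN.trans_lt (Real.rpow_lt_one_of_one_lt_of_neg hN1 (by linarith))
  exact_mod_cast ((div_lt_one (by linarith)).1 this).le

theorem lowerGap_nonneg (hMN : (M:ℝ)/N ≤ (N:ℝ)^(-δ)) : 0 ≤ lowerGap β δ N M :=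
  div_nonneg (mul_nonneg (by positivity) (sub_nonneg.2 hMN)) (by positivity)

theorem upperGap_nonneg (hN : 1 < N) (hδ : 0 < δ) : 0 ≤ upperGap β δ N := by
  have hN1 : (1:ℝ) < N := by exact_mod_cast hN
  have := Real.rpow_lt_one_of_one_lt_of_neg hN1 (neg_neg_of_pos hδ)
  exact div_nonneg (by positivity) (by linarith)

theorem sum_G_diag_le (hN : 1 < N) (hδ : 0 < δ) (hMN : (M:ℝ)/N ≤ (N:ℝ)^(-δ)) :
    ∑ n ∈ Icc 1 M, G β δ N n n ≤ M * Real.exp (upperGap β δ N * M) := by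
  have hMleN := le_of_div_le_rpow_neg hN hδ hMN
  have hC := upperGap_nonneg (β := β) hN hδ
  calc ∑ n ∈ Icc 1 M, G β δ N n n ≤ ∑ _n ∈ Icc 1 M, Real.exp (upperGap β δ N * M) := by
        refine sum_le_sum fun n hn => ?_
        rw [mem_Icc] at hn
        refine (G_diag_le_exp hn.1 hC (one_le_qr (hn.2.trans hMleN))
          fun k hk => ?_).trans ?_
        · have := rate_ratio_bounds (β := β) hN hδ hMN (k := k) (by omega)
          exact ⟨by linarith [lowerGap_nonneg (β := β) hMN], this.2⟩
        · gcongr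
          exact_mod_cast hn.2
    _ = M * Real.exp (upperGap β δ N * M) := by simp

theorem pow_div_le_sum_G_diag (hN : 1 < N) (hδ : 0 < δ) (hM : 1 ≤ M)
    (hMN : (M:ℝ)/N ≤ (N:ℝ)^(-δ)) :
    (1 + lowerGap β δ N M)^(M-1) / (M * qr β N M) ≤ ∑ n ∈ Icc 1 M, G β δ N n n := by
  have hMleN := le_of_div_le_rpow_neg hN hδ hMN
  have hc := lowerGap_nonneg (β := β) hMN
  have hlow : ∀ n ∈ Icc 1 M,
      (1 + lowerGap β δ N M)^(n-1) / (n * qr β N n) ≤ G β δ N n n := by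
    intro n hn
    rw [mem_Icc] at hn
    exact pow_div_le_G_diag hn.1 hc (by linarith [one_le_qr (β := β) (hn.2.trans hMleN)])
      fun k hk => (rate_ratio_bounds hN hδ hMN (by omega)).1
  have hG : ∀ n ∈ Icc 1 M, 0 ≤ G β δ N n n := fun n hn =>
    (div_nonneg (by positivity) (mul_nonneg n.cast_nonneg
      (by linarith [one_le_qr (β := β) ((mem_Icc.1 hn).2.trans hMleN)]))).trans (hlow n hn)
  exact (hlow M (by simp [hM])).trans <|
    single_le_sum (f := fun n => G β δ N n n) hG (by simp [hM])

theorem log_sum_G_diag_bounds (hN : 1 < N) (hδ : 0 < δ) (hM : 1 ≤ M)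
    (hMN : (M:ℝ)/N ≤ (N:ℝ)^(-δ)) :
    (M - 1) * (2 * lowerGap β δ N M / (lowerGap β δ N M + 2)) - Real.log (M * qr β N M)
        ≤ Real.log (∑ n ∈ Icc 1 M, G β δ N n n) ∧
      Real.log (∑ n ∈ Icc 1 M, G β δ N n n) ≤ Real.log M + M * upperGap β δ N := by
  have hlow := pow_div_le_sum_G_diag (β := β) hN hδ hM hMN
  have hM0 : (0:ℝ) < M := by exact_mod_cast hM
  have hq := one_le_qr (β := β) (le_of_div_le_rpow_neg hN hδ hMN)
  have hc := lowerGap_nonneg (β := β) hMN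
  have hlow_pos : 0 < (1 + lowerGap β δ N M)^(M-1) / (M * qr β N M) := by
    have : 0 < qr β N M := by linarith
    positivity
  constructor
  · have hlog := Real.log_le_log hlow_pos hlow
    rw [Real.log_div (by positivity) (by positivity), Real.log_pow, Nat.cast_sub hM,
      Nat.cast_one] at hlog
    have := Real.le_log_one_add_of_nonneg hc
    nlinarith [sub_nonneg.2 (show (1:ℝ) ≤ M by exact_mod_cast hM)]
  · have hlog := Real.log_le_log (hlow_pos.trans_le hlow) (sum_G_diag_le hN hδ hMN)
    rwa [Real.log_mul hM0.ne' (Real.exp_pos _).ne', Real.log_exp, mul_comm _ (M:ℝ)] at hlog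

end SumBounds

section Cutoff

variable {δ α : ℝ} {N : ℕ}

theorem floor_rpow_div_le (hN : 0 < N) : (⌊(N:ℝ)^α⌋₊ : ℝ) / N ≤ (N:ℝ)^(α - 1) := by
  have hN' : (0:ℝ) < N := by exact_mod_cast hN
  rw [Real.rpow_sub hN', Real.rpow_one]
  gcongr
  exact Nat.floor_le (by positivity)

theorem one_le_floor_rpow (hα : 0 ≤ α) (hN : 0 < N) : 1 ≤ ⌊(N:ℝ)^α⌋₊ :=
  Nat.le_floor <| by simpa using Real.one_le_rpow (by exact_mod_cast hN) hα

theorem floor_rpow_le_self (hα : α ≤ 1) (hN : 0 < N) : ⌊(N:ℝ)^α⌋₊ ≤ N :=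
  Nat.floor_le_of_le (Real.rpow_le_self_of_one_le (by exact_mod_cast hN) hα)

theorem floor_rpow_div_le_rpow_neg (hα : α ≤ 1 - δ) (hN : 0 < N) :
    (⌊(N:ℝ)^α⌋₊ : ℝ) / N ≤ (N:ℝ)^(-δ) :=
  (floor_rpow_div_le hN).trans <|
    Real.rpow_le_rpow_of_exponent_le (by exact_mod_cast hN) (by linarith)

end Cutoff

section Asymptotics

variable {β δ α : ℝ}

theorem tendsto_natCast_rpow_neg {b : ℝ} (hb : 0 < b) :
    Tendsto (fun N : ℕ => (N:ℝ)^(-b)) atTop (nhds 0) :=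
  (tendsto_rpow_neg_atTop hb).comp tendsto_natCast_atTop_atTop

theorem tendsto_floor_rpow_div (hα : 0 < α) :
    Tendsto (fun N : ℕ => (⌊(N:ℝ)^α⌋₊ : ℝ) / (N:ℝ)^α) atTop (nhds 1) :=
  tendsto_nat_floor_div_atTop.comp ((tendsto_rpow_atTop hα).comp tendsto_natCast_atTop_atTop)

theorem tendsto_rpow_mul_upperGap (hδ : 0 < δ) :
    Tendsto (fun N : ℕ => (N:ℝ)^(β + δ) * upperGap β δ N) atTop (nhds 2) := by
  have h : Tendsto (fun N : ℕ => 2 / (1 - (N:ℝ)^(-δ))) atTop (nhds 2) := by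
    simpa [Pi.div_def] using
      tendsto_const_nhds.div (tendsto_const_nhds.sub (tendsto_natCast_rpow_neg hδ))
        (by norm_num : (1:ℝ) - 0 ≠ 0)
  refine h.congr' ?_
  filter_upwards [eventually_gt_atTop 0] with N hN
  have hN' : (0:ℝ) < N := by exact_mod_cast hN
  rw [upperGap, Real.rpow_add hN', Real.rpow_neg hN'.le, Real.rpow_neg hN'.le]
  have : (0:ℝ) < (N:ℝ)^β := by positivity
  have : (0:ℝ) < (N:ℝ)^δ := by positivity
  field_simp

theorem tendsto_rpow_mul_lowerGap (hβ : 0 < β) (hαδ : α + δ < 1) :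
    Tendsto (fun N : ℕ => (N:ℝ)^(β + δ) * lowerGap β δ N ⌊(N:ℝ)^α⌋₊) atTop (nhds 2) := by
  have hμ : Tendsto (fun N : ℕ => (⌊(N:ℝ)^α⌋₊ : ℝ) / N * (N:ℝ)^δ) atTop (nhds 0) := by
    refine squeeze_zero' (Eventually.of_forall fun N => by positivity)
      ?_ (tendsto_natCast_rpow_neg (b := 1 - α - δ) (by linarith))
    filter_upwards [eventually_gt_atTop 0] with N hN
    have hN' : (0:ℝ) < N := by exact_mod_cast hN
    calc (⌊(N:ℝ)^α⌋₊ : ℝ) / N * (N:ℝ)^δ ≤ (N:ℝ)^(α - 1) * (N:ℝ)^δ := by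
          gcongr
          exact floor_rpow_div_le hN
      _ = (N:ℝ)^(-(1 - α - δ)) := by rw [← Real.rpow_add hN']; ring_nf
  have h : Tendsto (fun N : ℕ => 2 * (1 - (⌊(N:ℝ)^α⌋₊ : ℝ) / N * (N:ℝ)^δ) /
      (1 + 2 * (N:ℝ)^(-β))) atTop (nhds 2) := by
    simpa [Pi.div_def] using
      ((tendsto_const_nhds (x := (2:ℝ))).mul (tendsto_const_nhds (x := (1:ℝ)).sub hμ)).div
      (tendsto_const_nhds.add ((tendsto_natCast_rpow_neg hβ).const_mul 2))
      (by norm_num : (1:ℝ) + 2 * 0 ≠ 0)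
  refine h.congr' ?_
  filter_upwards [eventually_gt_atTop 0] with N hN
  have hN' : (0:ℝ) < N := by exact_mod_cast hN
  rw [lowerGap, Real.rpow_add hN', Real.rpow_neg hN'.le, Real.rpow_neg hN'.le]
  have : (0:ℝ) < (N:ℝ)^β := by positivity
  have : (0:ℝ) < (N:ℝ)^δ := by positivity
  field_simp

theorem tendsto_rpow_mul_two_mul_div_add_two {b L : ℝ} (hb : 0 < b) {c : ℕ → ℝ}
    (hc : Tendsto (fun N : ℕ => (N:ℝ)^b * c N) atTop (nhds L)) :
    Tendsto (fun N : ℕ => (N:ℝ)^b * (2 * c N / (c N + 2))) atTop (nhds L) := by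
  have hc0 : Tendsto c atTop (nhds 0) := by
    have h := (tendsto_natCast_rpow_neg hb).mul hc
    rw [zero_mul] at h
    refine h.congr' ?_
    filter_upwards [eventually_gt_atTop 0] with N hN
    rw [← mul_assoc, ← Real.rpow_add (by exact_mod_cast hN), neg_add_cancel, Real.rpow_zero,
      one_mul]
  have h := (hc.const_mul 2).div (hc0.add_const 2) (by norm_num)
  norm_num [Pi.div_def] at h
  refine h.congr fun N => ?_
  ring

theorem tendsto_mul_div_two_rpow {u v : ℕ → ℝ}
    (hu : Tendsto (fun N : ℕ => u N / (N:ℝ)^α) atTop (nhds 1))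
    (hv : Tendsto (fun N : ℕ => (N:ℝ)^(β + δ) * v N) atTop (nhds 2)) :
    Tendsto (fun N : ℕ => u N * v N / (2 * (N:ℝ)^(α - β - δ))) atTop (nhds 1) := by
  have h := (hu.mul hv).div_const 2
  norm_num at h
  refine h.congr' ?_
  filter_upwards [eventually_gt_atTop 0] with N hN
  have hN' : (0:ℝ) < N := by exact_mod_cast hN
  have hsplit : (N:ℝ)^α = (N:ℝ)^(α - β - δ) * (N:ℝ)^(β + δ) := by
    rw [← Real.rpow_add hN']; ring_nf
  have : (0:ℝ) < (N:ℝ)^(α - β - δ) := by positivity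
  have : (0:ℝ) < (N:ℝ)^(β + δ) := by positivity
  rw [hsplit]
  field_simp

theorem tendsto_log_div_two_rpow {ε : ℝ} (hε : 0 < ε) {h : ℕ → ℝ}
    (hh : ∀ᶠ N in atTop, 1 ≤ h N ∧ h N ≤ (N:ℝ)^2) :
    Tendsto (fun N : ℕ => Real.log (h N) / (2 * (N:ℝ)^ε)) atTop (nhds 0) := by
  have hlog : Tendsto (fun N : ℕ => Real.log N / (N:ℝ)^ε) atTop (nhds 0) :=
    (isLittleO_log_rpow_atTop hε).tendsto_div_nhds_zero.comp tendsto_natCast_atTop_atTop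
  refine squeeze_zero' ?_ ?_ hlog
  · filter_upwards [hh] with N hN
    have := Real.log_nonneg hN.1
    positivity
  · filter_upwards [hh, eventually_gt_atTop 0] with N hN hN0
    have hN0' : (0:ℝ) < N := by exact_mod_cast hN0
    have : Real.log (h N) ≤ 2 * Real.log N := by
      simpa [Real.log_pow] using Real.log_le_log (by linarith [hN.1]) hN.2
    calc Real.log (h N) / (2 * (N:ℝ)^ε) ≤ 2 * Real.log N / (2 * (N:ℝ)^ε) := by gcongr
      _ = Real.log N / (N:ℝ)^ε := mul_div_mul_left _ _ two_ne_zero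

end Asymptotics

section BoundLimits

variable {β δ α : ℝ}

theorem tendsto_lower_bound_div (hβ : 0 < β) (hδ : 0 < δ) (hαε : β + δ < α)
    (hαδ : α + δ < 1) :
    Tendsto (fun N : ℕ =>
      (((⌊(N:ℝ)^α⌋₊ : ℝ) - 1) * (2 * lowerGap β δ N ⌊(N:ℝ)^α⌋₊ /
          (lowerGap β δ N ⌊(N:ℝ)^α⌋₊ + 2)) - Real.log (⌊(N:ℝ)^α⌋₊ * qr β N ⌊(N:ℝ)^α⌋₊)) /
        (2 * (N:ℝ)^(α - β - δ))) atTop (nhds 1) := by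
  have hα : 0 < α := by linarith
  have hu : Tendsto (fun N : ℕ => ((⌊(N:ℝ)^α⌋₊ : ℝ) - 1) / (N:ℝ)^α) atTop (nhds 1) := by
    have h := (tendsto_floor_rpow_div hα).sub (tendsto_natCast_rpow_neg hα)
    rw [sub_zero] at h
    refine h.congr' ?_
    filter_upwards [eventually_gt_atTop 0] with N hN
    rw [sub_div, Real.rpow_neg (Nat.cast_nonneg N), inv_eq_one_div]
  have hmain := tendsto_mul_div_two_rpow hu <|
    tendsto_rpow_mul_two_mul_div_add_two (by linarith) (tendsto_rpow_mul_lowerGap hβ hαδ)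
  have hlog := tendsto_log_div_two_rpow (ε := α - β - δ) (by linarith)
    (h := fun N : ℕ => ⌊(N:ℝ)^α⌋₊ * qr β N ⌊(N:ℝ)^α⌋₊) <| by
      filter_upwards [eventually_ge_atTop 2] with N hN
      have hM1 : (1:ℝ) ≤ ⌊(N:ℝ)^α⌋₊ := by exact_mod_cast one_le_floor_rpow hα.le (by omega)
      have hMN := floor_rpow_le_self (N := N) (by linarith) (by omega)
      have hMN' : (⌊(N:ℝ)^α⌋₊ : ℝ) ≤ N := by exact_mod_cast hMN
      have hq1 := one_le_qr (β := β) hMN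
      have hqN := qr_le_self (k := ⌊(N:ℝ)^α⌋₊) hN (by linarith : β ≤ 1)
      constructor
      · nlinarith
      · rw [sq]
        exact mul_le_mul hMN' hqN (by linarith) (by positivity)
  have h := hmain.sub hlog
  rw [sub_zero] at h
  exact h.congr fun N => (sub_div _ _ _).symm

theorem tendsto_upper_bound_div (hδ : 0 < δ) (hα : 0 < α) (hαε : β + δ < α) (hα1 : α ≤ 1) :
    Tendsto (fun N : ℕ =>
      (Real.log ⌊(N:ℝ)^α⌋₊ + ⌊(N:ℝ)^α⌋₊ * upperGap β δ N) / (2 * (N:ℝ)^(α - β - δ)))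
      atTop (nhds 1) := by
  have hmain := tendsto_mul_div_two_rpow (tendsto_floor_rpow_div hα)
    (tendsto_rpow_mul_upperGap (β := β) hδ)
  have hlog := tendsto_log_div_two_rpow (ε := α - β - δ) (by linarith)
    (h := fun N : ℕ => (⌊(N:ℝ)^α⌋₊ : ℝ)) <| by
      filter_upwards [eventually_gt_atTop 0] with N hN
      have hM1 : (1:ℝ) ≤ ⌊(N:ℝ)^α⌋₊ := by exact_mod_cast one_le_floor_rpow hα.le hN
      have hMN : (⌊(N:ℝ)^α⌋₊ : ℝ) ≤ N := by exact_mod_cast floor_rpow_le_self hα1 hN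
      exact ⟨hM1, hMN.trans (by nlinarith)⟩
  have h := hlog.add hmain
  rw [zero_add] at h
  exact h.congr fun N => (add_div _ _ _).symm

end BoundLimits

theorem statement4_general (β δ α : ℝ)
    (hβ0 : 0 < β)
    (hδ0 : 0 < δ)
    (hα0 : β + δ < α) (hα1 : α < 1 - δ) :
    Tendsto (fun N : ℕ =>
        Real.log (∑ n ∈ Finset.Icc 1 ⌊(N:ℝ)^α⌋₊, G β δ N n n) /
          (2 * (N:ℝ)^(α - β - δ)))
      atTop (nhds 1) := by
  have hbounds := fun (N : ℕ) (hN : 1 < N) => log_sum_G_diag_bounds (β := β) hN hδ0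
    (one_le_floor_rpow (by linarith) (by omega)) (floor_rpow_div_le_rpow_neg hα1.le (by omega))
  refine tendsto_of_tendsto_of_tendsto_of_le_of_le'
    (tendsto_lower_bound_div hβ0 hδ0 hα0 (by linarith))
    (tendsto_upper_bound_div hδ0 (by linarith) hα0 (by linarith)) ?_ ?_
  · filter_upwards [eventually_gt_atTop 1] with N hN
    exact div_le_div_of_nonneg_right (hbounds N hN).1 (by positivity)
  · filter_upwards [eventually_gt_atTop 1] with N hN
    exact div_le_div_of_nonneg_right (hbounds N hN).2 (by positivity)

/-- In the exponential regime `ℰ`, for `β + δ < α < 1 − δ`,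
`Σ_{n=1}^{⌊N^α⌋} G_N(n,n)` is logarithmically equivalent to `exp(2 N^{α−β−δ})`. -/
theorem statement4 (β δ α : ℝ)
    (hβ0 : 0 < β) (hβ1 : β < 1)
    (hδ0 : 0 < δ) (hδ1 : δ < (1 - β)/2)
    (hα0 : β + δ < α) (hα1 : α < 1 - δ) :
    Tendsto (fun N : ℕ =>
        Real.log (∑ n ∈ Finset.Icc 1 ⌊(N:ℝ)^α⌋₊, G β δ N n n) /
          (2 * (N:ℝ)^(α - β - δ)))
      atTop (nhds 1) :=
  statement4_general β δ α hβ0 hδ0 hα0 hα1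

end MullerRatchet4
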